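/- Let ℱ be a free filter on ℕ and F ∈ ℱ with ℕ \ F infinite. Then the Rees quotient of E = (ℕ_{ℱ,min} × {0}) ∪ ((ℕ \ F) × {1}) by the ideal I = ℕ_{ℱ,min} × {0}, endowed with the quotient topology, is a discrete topological semilattice that is not 𝓗-complete; consequently E is not 𝓐𝓗-complete. -/

import Mathlib

open Topology Set

/-- A filter is free if the intersection of all its members is empty. -/
def FreeF (F : Filter ℕ) : Prop := ⋂₀ F.sets = ∅

/-- The topology on ℕ_ℱ = ℕ ∪ {ℱ} (modelled as `Option ℕ`, with `none` the point ℱ):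
all points of ℕ are isolated, and the sets F ∪ {ℱ}, F ∈ ℱ, form a neighbourhood base at ℱ. -/
def nfTop (F : Filter ℕ) : TopologicalSpace (Option ℕ) where
  IsOpen U := none ∈ U → {n : ℕ | some n ∈ U} ∈ F
  isOpen_univ := fun _ => by simp
  isOpen_inter := fun U V hU hV h => Filter.inter_mem (hU h.1) (hV h.2)
  isOpen_sUnion := fun S hS h => by
    obtain ⟨U, hUS, hnU⟩ := h
    exact Filter.mem_of_superset (hS U hUS hnU) fun n hn => ⟨U, hUS, hn⟩

/-- min on ℕ extended to ℕ_ℱ by min(n,ℱ) = n, min(ℱ,ℱ) = ℱ. -/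
def minOp : Option ℕ → Option ℕ → Option ℕ
  | none, y => y
  | some a, none => some a
  | some a, some b => some (min a b)

/-- max on ℕ extended to ℕ_ℱ by max(n,ℱ) = ℱ = max(ℱ,ℱ). -/
def maxOp : Option ℕ → Option ℕ → Option ℕ
  | none, _ => none
  | _, none => none
  | some a, some b => some (max a b)

/-- `X` with operation `op` is a (Hausdorff) topological semilattice. -/
structure IsTopSemilattice (X : Type*) [TopologicalSpace X] (op : X → X → X) : Prop where
  t2 : T2Space X
  comm : ∀ a b, op a b = op b a
  idem : ∀ a, op a a = a
  assoc : ∀ a b c, op (op a b) c = op a (op b c)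
  cont : Continuous fun p : X × X => op p.1 p.2

/-- 𝓗-completeness: the image under any topological embedding which is a semilattice
homomorphism into a Hausdorff topological semilattice is closed. -/
def HComplete (X : Type*) [TopologicalSpace X] (op : X → X → X) : Prop :=
  ∀ (Y : Type*) [TopologicalSpace Y] (opY : Y → Y → Y), IsTopSemilattice Y opY →
    ∀ f : X → Y, Topology.IsEmbedding f →
      (∀ a b, f (op a b) = opY (f a) (f b)) → IsClosed (Set.range f)

/-- 𝓐𝓗-completeness: the image under any continuous semilattice homomorphism
into a Hausdorff topological semilattice is closed. -/
def AHComplete (X : Type*) [TopologicalSpace X] (op : X → X → X) : Prop :=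
  ∀ (Y : Type*) [TopologicalSpace Y] (opY : Y → Y → Y), IsTopSemilattice Y opY →
    ∀ f : X → Y, Continuous f →
      (∀ a b, f (op a b) = opY (f a) (f b)) → IsClosed (Set.range f)

/-- The product topology on ℕ_{ℱ,min} × E₂ (E₂ = {0,1} discrete, modelled as `Bool`). -/
def prodTopB (F : Filter ℕ) : TopologicalSpace (Option ℕ × Bool) :=
  @instTopologicalSpaceProd _ _ (nfTop F) inferInstance

/-- The coordinatewise semilattice operation on ℕ_{ℱ,min} × E₂ (min on both coordinates). -/
def pOpB (p q : Option ℕ × Bool) : Option ℕ × Bool := (minOp p.1 q.1, p.2 && q.2)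

/-- The subset E = (ℕ_{ℱ,min} × {0}) ∪ ((ℕ \ F) × {1}). -/
def EsetB (Fs : Set ℕ) : Set (Option ℕ × Bool) :=
  (Set.univ ×ˢ {false}) ∪ ((some '' Fsᶜ) ×ˢ {true})

/-- The ideal I = ℕ_{ℱ,min} × {0}. -/
def IsetB : Set (Option ℕ × Bool) := Set.univ ×ˢ {false}

/-- The subspace topology on E ⊆ ℕ_{ℱ,min} × E₂. -/
def subTopB (F : Filter ℕ) (Fs : Set ℕ) : TopologicalSpace (EsetB Fs) :=
  @instTopologicalSpaceSubtype _ _ (prodTopB F)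

/-- The Rees congruence on E identifying all points of the ideal I = ℕ_{ℱ,min} × {0}. -/
def reesSetoidB (Fs : Set ℕ) : Setoid (EsetB Fs) where
  r a b := a = b ∨ ((a : Option ℕ × Bool) ∈ IsetB ∧ (b : Option ℕ × Bool) ∈ IsetB)
  iseqv := by
    refine ⟨fun _ => Or.inl rfl, ?_, ?_⟩
    · rintro a b (rfl | h)
      · exact Or.inl rfl
      · exact Or.inr ⟨h.2, h.1⟩
    · rintro a b c (rfl | h1) h2
      · exact h2
      · rcases h2 with rfl | h2
        · exact Or.inr h1
        · exact Or.inr ⟨h1.1, h2.2⟩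

/-- The quotient topology on the Rees quotient E/I. -/
def qTopB (F : Filter ℕ) (Fs : Set ℕ) : TopologicalSpace (Quotient (reesSetoidB Fs)) :=
  (subTopB F Fs).coinduced (Quotient.mk (reesSetoidB Fs))

/-! The Rees quotient `E/I` consists of the zero `I` and the points `(n, 1)`, `n ∉ F`, each of
which is isolated in `E`. Sending `I ↦ 0` and `(n, 1) ↦ n + 1` embeds `E/I` as a discrete
subsemilattice of `(ℕ∞, min)` whose image has `⊤` in its closure, since `ℕ \ F` is infinite.
Precomposed with `E → E/I`, the same map is a continuous homomorphism of `E` with non-closed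
image. -/

universe u w

section Semilattice

variable {X : Type u} [TopologicalSpace X] {op : X → X → X}

lemma isTopSemilattice_min (α : Type*) [LinearOrder α] [TopologicalSpace α]
    [OrderClosedTopology α] : IsTopSemilattice α min :=
  ⟨inferInstance, min_comm, min_self, min_assoc, continuous_min⟩

lemma IsTopSemilattice.ulift {Y : Type*} [TopologicalSpace Y] {opY : Y → Y → Y}
    (hY : IsTopSemilattice Y opY) :
    IsTopSemilattice (ULift.{w} Y) fun a b => ULift.up (opY a.down b.down) where
  t2 := by have := hY.t2; infer_instance
  comm a b := congrArg ULift.up (hY.comm _ _)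
  idem a := congrArg ULift.up (hY.idem _)
  assoc a b c := congrArg ULift.up (hY.assoc _ _ _)
  cont := continuous_uliftUp.comp <| hY.cont.comp <|
    (continuous_uliftDown.comp continuous_fst).prodMk (continuous_uliftDown.comp continuous_snd)

lemma IsTopSemilattice.of_injective [DiscreteTopology X] {Y : Type*} [TopologicalSpace Y]
    {opY : Y → Y → Y} (hY : IsTopSemilattice Y opY) {f : X → Y} (hf : Function.Injective f)
    (hom : ∀ a b, f (op a b) = opY (f a) (f b)) : IsTopSemilattice X op where
  t2 := inferInstance
  comm a b := hf <| by rw [hom, hom, hY.comm]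
  idem a := hf <| by rw [hom, hY.idem]
  assoc a b c := hf <| by rw [hom, hom, hom, hom, hY.assoc]
  cont := continuous_of_discreteTopology

lemma not_hComplete_of_isEmbedding {Y : Type} [TopologicalSpace Y] {opY : Y → Y → Y}
    (hY : IsTopSemilattice Y opY) {f : X → Y} (hf : IsEmbedding f)
    (hom : ∀ a b, f (op a b) = opY (f a) (f b)) (hrange : ¬ IsClosed (range f)) :
    ¬ HComplete.{u, w} X op := fun hX => hrange <| by
  have := hX (ULift Y) _ hY.ulift (ULift.up ∘ f) (Homeomorph.ulift.symm.isEmbedding.comp hf)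
    fun a b => congrArg ULift.up (hom a b)
  rw [range_comp] at this
  exact Homeomorph.ulift.symm.isClosed_image.1 this

lemma not_ahComplete_of_continuous {Y : Type} [TopologicalSpace Y] {opY : Y → Y → Y}
    (hY : IsTopSemilattice Y opY) {f : X → Y} (hf : Continuous f)
    (hom : ∀ a b, f (op a b) = opY (f a) (f b)) (hrange : ¬ IsClosed (range f)) :
    ¬ AHComplete.{u, w} X op := fun hX => hrange <| by
  have := hX (ULift Y) _ hY.ulift (ULift.up ∘ f) (continuous_uliftUp.comp hf)
    fun a b => congrArg ULift.up (hom a b)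
  rw [range_comp] at this
  exact Homeomorph.ulift.symm.isClosed_image.1 this

end Semilattice

section IsolatedValues

variable {X Y : Type*} [TopologicalSpace X] [TopologicalSpace Y] {f : X → Y}

lemma discreteTopology_of_isOpen_singleton_image (hf : Continuous f)
    (hinj : Function.Injective f) (ho : ∀ x, IsOpen {f x}) : DiscreteTopology X :=
  discreteTopology_iff_isOpen_singleton.2 fun x => by
    simpa [preimage, hinj.eq_iff] using (ho x).preimage hf

lemma isOpenEmbedding_of_isOpen_singleton_image [DiscreteTopology X]
    (hinj : Function.Injective f) (ho : ∀ x, IsOpen {f x}) : IsOpenEmbedding f :=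
  .of_continuous_injective_isOpenMap continuous_of_discreteTopology hinj fun U _ => by
    rw [← biUnion_of_singleton U, image_iUnion₂]
    simpa using isOpen_biUnion fun x _ => ho x

end IsolatedValues

lemma mem_closure_image_of_tendsto {X : Type*} [TopologicalSpace X] {g : ℕ → X} {x : X}
    (hg : Filter.Tendsto g Filter.atTop (𝓝 x)) {s : Set ℕ} (hs : s.Infinite) :
    x ∈ closure (g '' s) :=
  mem_closure_of_frequently_of_tendsto
    ((Nat.frequently_atTop_iff_infinite.2 hs).mono fun _ hn => mem_image_of_mem g hn) hg

lemma mem_EsetB {Fs : Set ℕ} {p : Option ℕ × Bool} :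
    p ∈ EsetB Fs ↔ (p.2 = true → ∃ n ∉ Fs, p.1 = some n) := by
  obtain ⟨x, b⟩ := p
  cases b <;> simp [EsetB, eq_comm]

lemma pOpB_mem_EsetB {Fs : Set ℕ} {p q : Option ℕ × Bool} (hp : p ∈ EsetB Fs)
    (hq : q ∈ EsetB Fs) : pOpB p q ∈ EsetB Fs := by
  rw [mem_EsetB] at hp hq ⊢
  intro h
  obtain ⟨hp2, hq2⟩ : p.2 = true ∧ q.2 = true := by simpa [pOpB] using h
  obtain ⟨n, hn, hpn⟩ := hp hp2
  obtain ⟨m, hm, hqm⟩ := hq hq2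
  refine ⟨min n m, ?_, by simp [pOpB, minOp, hpn, hqm]⟩
  rcases min_choice n m with h | h <;> rwa [h]

-- Sending `(ℱ, 1) ∉ E` to `⊤` makes `reesRank` a homomorphism on the whole of `ℕ_ℱ × E₂`.
def reesRank : Option ℕ × Bool → ℕ∞
  | (_, false) => 0
  | (none, true) => ⊤
  | (some n, true) => (n + 1 : ℕ)

lemma reesRank_pOpB (p q : Option ℕ × Bool) :
    reesRank (pOpB p q) = min (reesRank p) (reesRank q) := by
  obtain ⟨x | n, _ | _⟩ := p <;> obtain ⟨y | m, _ | _⟩ := q <;>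
    simp [pOpB, minOp, reesRank, (Nat.strictMono_cast (α := ℕ∞)).monotone.map_min,
      min_add_add_right]

lemma ne_none_true_of_mem_EsetB {Fs : Set ℕ} {p : Option ℕ × Bool} (hp : p ∈ EsetB Fs) :
    p ≠ (none, true) := by
  rintro rfl
  simpa using mem_EsetB.1 hp rfl

lemma reesRank_ne_top {p : Option ℕ × Bool} (hp : p ≠ (none, true)) : reesRank p ≠ ⊤ := by
  obtain ⟨_ | n, _ | _⟩ := p <;> simp_all [reesRank]

lemma reesRank_eq_iff {p q : Option ℕ × Bool} (hp : p ≠ (none, true)) (hq : q ≠ (none, true)) :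
    reesRank p = reesRank q ↔ p = q ∨ (p ∈ IsetB ∧ q ∈ IsetB) := by
  obtain ⟨x | n, _ | _⟩ := p <;> obtain ⟨y | m, _ | _⟩ := q <;>
    simp_all [reesRank, IsetB, eq_comm (a := (0 : ℕ∞))]

lemma isOpen_reesRank_fiber (F : Filter ℕ) {p : Option ℕ × Bool} (hp : p ≠ (none, true)) :
    IsOpen[prodTopB F] (reesRank ⁻¹' {reesRank p}) := by
  let := nfTop F
  obtain ⟨x, _ | _⟩ := p
  · rw [show reesRank ⁻¹' {reesRank (x, false)} = univ ×ˢ {false} by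
      ext ⟨y | m, _ | _⟩ <;> simp [reesRank]]
    exact isOpen_univ.prod (isOpen_discrete _)
  obtain _ | n := x
  · exact absurd rfl hp
  rw [show reesRank ⁻¹' {reesRank (some n, true)} = {some n} ×ˢ {true} by
    ext ⟨y | m, _ | _⟩ <;> simp [reesRank, eq_comm (a := (0 : ℕ∞)), eq_comm (a := (⊤ : ℕ∞))]]
  exact (show IsOpen {some n} from fun h => absurd h (by simp)).prod (isOpen_discrete _)

section ReesQuotient

variable (F : Filter ℕ) (Fs : Set ℕ)

lemma continuous_reesRank_val :
    Continuous[subTopB F Fs, _] fun a : EsetB Fs => reesRank a.1 := by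
  let := prodTopB F
  exact IsLocallyConstant.continuous <| IsLocallyConstant.iff_isOpen_fiber_apply.2 fun a =>
    isOpen_induced (isOpen_reesRank_fiber F (ne_none_true_of_mem_EsetB a.2))

variable {Fs} in
lemma reesRank_eq_iff_rel {a b : EsetB Fs} :
    reesRank a.1 = reesRank b.1 ↔ reesSetoidB Fs a b := by
  rw [reesRank_eq_iff (ne_none_true_of_mem_EsetB a.2) (ne_none_true_of_mem_EsetB b.2),
    ← Subtype.ext_iff]
  rfl

def reesOp : Quotient (reesSetoidB Fs) → Quotient (reesSetoidB Fs) → Quotient (reesSetoidB Fs) :=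
  Quotient.map₂ (fun a b => ⟨pOpB a b, pOpB_mem_EsetB a.2 b.2⟩) fun a₁ a₂ ha b₁ b₂ hb =>
    reesRank_eq_iff_rel.1 <| by
      rw [reesRank_pOpB, reesRank_pOpB, reesRank_eq_iff_rel.2 ha, reesRank_eq_iff_rel.2 hb]

def reesRankQ : Quotient (reesSetoidB Fs) → ℕ∞ :=
  Quotient.lift (fun a => reesRank a.1) fun _ _ h => reesRank_eq_iff_rel.2 h

lemma reesRankQ_injective : Function.Injective (reesRankQ Fs) := by
  intro x y
  induction x, y using Quotient.inductionOn₂ with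
  | h a b => exact fun h => Quotient.sound (reesRank_eq_iff_rel.1 h)

lemma reesRankQ_reesOp (x y : Quotient (reesSetoidB Fs)) :
    reesRankQ Fs (reesOp Fs x y) = min (reesRankQ Fs x) (reesRankQ Fs y) := by
  induction x, y using Quotient.inductionOn₂ with
  | h a b => exact reesRank_pOpB a.1 b.1

lemma isOpen_singleton_reesRankQ (x : Quotient (reesSetoidB Fs)) : IsOpen {reesRankQ Fs x} := by
  induction x using Quotient.inductionOn with
  | h a => exact ENat.isOpen_singleton (reesRank_ne_top (ne_none_true_of_mem_EsetB a.2))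

lemma continuous_reesRankQ : Continuous[qTopB F Fs, _] (reesRankQ Fs) :=
  continuous_coinduced_dom.2 (continuous_reesRank_val F Fs)

lemma range_reesRankQ : range (reesRankQ Fs) = range fun a : EsetB Fs => reesRank a.1 :=
  range_quot_lift _

variable {Fs} in
lemma not_isClosed_range_reesRank (hinf : Fsᶜ.Infinite) :
    ¬ IsClosed (range fun a : EsetB Fs => reesRank a.1) := by
  intro hclosed
  have himage : (fun n : ℕ => ((n + 1 : ℕ) : ℕ∞)) '' Fsᶜ ⊆ range fun a : EsetB Fs => reesRank a.1 :=
    fun _ ⟨n, hn, h⟩ => ⟨⟨(some n, true), mem_EsetB.2 fun _ => ⟨n, hn, rfl⟩⟩, h⟩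
  have htop := closure_mono himage <| mem_closure_image_of_tendsto
    (ENat.tendsto_natCast_nhds_top.comp (Filter.tendsto_add_atTop_nat 1)) hinf
  obtain ⟨a, ha⟩ := hclosed.closure_eq ▸ htop
  exact reesRank_ne_top (ne_none_true_of_mem_EsetB a.2) ha

end ReesQuotient

theorem reesQuotientB_discrete_not_hComplete_general (F : Filter ℕ)
    (Fs : Set ℕ) (hinf : Fsᶜ.Infinite)
    (hsub : ∀ p ∈ EsetB Fs, ∀ q ∈ EsetB Fs, pOpB p q ∈ EsetB Fs) :
    (∃ opQ : Quotient (reesSetoidB Fs) → Quotient (reesSetoidB Fs) → Quotient (reesSetoidB Fs),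
      (∀ a b : EsetB Fs,
        opQ (Quotient.mk (reesSetoidB Fs) a) (Quotient.mk (reesSetoidB Fs) b) =
          Quotient.mk (reesSetoidB Fs) ⟨pOpB a.1 b.1, hsub a.1 a.2 b.1 b.2⟩) ∧
      @DiscreteTopology _ (qTopB F Fs) ∧
      @IsTopSemilattice _ (qTopB F Fs) opQ ∧
      ¬ @HComplete _ (qTopB F Fs) opQ) ∧
    ¬ @AHComplete (EsetB Fs) (subTopB F Fs)
        (fun a b => ⟨pOpB a.1 b.1, hsub a.1 a.2 b.1 b.2⟩) := by
  let := qTopB F Fs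
  have hdisc : DiscreteTopology (Quotient (reesSetoidB Fs)) :=
    discreteTopology_of_isOpen_singleton_image (continuous_reesRankQ F Fs)
      (reesRankQ_injective Fs) (isOpen_singleton_reesRankQ Fs)
  refine ⟨⟨reesOp Fs, fun _ _ => rfl, hdisc, ?_, ?_⟩, ?_⟩
  · exact (isTopSemilattice_min ℕ∞).of_injective (reesRankQ_injective Fs) (reesRankQ_reesOp Fs)
  · exact not_hComplete_of_isEmbedding (isTopSemilattice_min ℕ∞)
      (isOpenEmbedding_of_isOpen_singleton_image (reesRankQ_injective Fs)
        (isOpen_singleton_reesRankQ Fs)).isEmbedding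
      (reesRankQ_reesOp Fs) (range_reesRankQ Fs ▸ not_isClosed_range_reesRank hinf)
  · let := subTopB F Fs
    exact not_ahComplete_of_continuous (isTopSemilattice_min ℕ∞) (continuous_reesRank_val F Fs)
      (fun a b => reesRank_pOpB a.1 b.1) (not_isClosed_range_reesRank hinf)

/-- the Rees quotient E/I with the quotient topology is a discrete
topological semilattice which is not 𝓗-complete; consequently E is not 𝓐𝓗-complete. -/
theorem reesQuotientB_discrete_not_hComplete (F : Filter ℕ) (hF : FreeF F)
    (Fs : Set ℕ) (hFs : Fs ∈ F) (hinf : Fsᶜ.Infinite)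
    (hsub : ∀ p ∈ EsetB Fs, ∀ q ∈ EsetB Fs, pOpB p q ∈ EsetB Fs) :
    (∃ opQ : Quotient (reesSetoidB Fs) → Quotient (reesSetoidB Fs) → Quotient (reesSetoidB Fs),
      (∀ a b : EsetB Fs,
        opQ (Quotient.mk (reesSetoidB Fs) a) (Quotient.mk (reesSetoidB Fs) b) =
          Quotient.mk (reesSetoidB Fs) ⟨pOpB a.1 b.1, hsub a.1 a.2 b.1 b.2⟩) ∧
      @DiscreteTopology _ (qTopB F Fs) ∧
      @IsTopSemilattice _ (qTopB F Fs) opQ ∧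
      ¬ @HComplete _ (qTopB F Fs) opQ) ∧
    ¬ @AHComplete (EsetB Fs) (subTopB F Fs)
        (fun a b => ⟨pOpB a.1 b.1, hsub a.1 a.2 b.1 b.2⟩) :=
  reesQuotientB_discrete_not_hComplete_general F Fs hinf hsub
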